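/- The intertwiner space C := C_{B'}(B(G,H)) is self-dual: for every linear map Φ : C → B(G) with Φ(x) ∈ B for all x ∈ C, Φ(x ∘ b) = Φ(x) ∘ b for all x ∈ C and b ∈ B, and which is bounded for the operator norms, there exists y ∈ C such that Φ(x) = y* ∘ x for all x ∈ C. -/

import Mathlib

/-!
For a finite family `x₁, …, xₙ` in `C` form the row `X = (x₁ … xₙ) : Gⁿ → H`, the row
`e = (Φ x₁ … Φ xₙ) : Gⁿ → G` and, for `ε > 0`, the regularized least-squares solution
`y = X (X*X + ε²)⁻¹ e*`. Each factor intertwines the diagonal action of `B'` (the `xᵢ` because they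
lie in `C`, the `Φ xᵢ` because they lie in `B = B''`), so `y ∈ C` and `y = ∑ xᵢ cᵢ` with `cᵢ ∈ B`.
Hence `Φ y = e (X*X + ε²)⁻¹ e*`, and `⟪Φ y g, g⟫ = ‖y g‖² + ε² ‖(X*X + ε²)⁻¹ e* g‖²` together with
`‖Φ y‖ ≤ ‖Φ‖ ‖y‖` gives `‖y‖ ≤ ‖Φ‖` and `|⟪y g', xᵢ g⟫ - ⟪g', Φ xᵢ g⟫| ≤ ε ‖Φ‖ ‖g‖ ‖g'‖`.
A weak-operator cluster point of these approximants, as the family grows and `ε → 0`, exists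
because norm balls are weakly compact; it stays in `C`, which is weakly closed, and represents `Φ`.
-/

open ContinuousLinearMap

/-- A set of bounded operators is closed in the strong operator topology, i.e. the
topology of pointwise norm convergence: every bounded operator lying in the closure of
the set inside `G → H` (with the product topology of the norm topologies) belongs to it. -/
def SOTClosed {G H : Type*} [NormedAddCommGroup G] [InnerProductSpace ℂ G]
    [NormedAddCommGroup H] [InnerProductSpace ℂ H] (E : Set (G →L[ℂ] H)) : Prop :=
  ∀ T : G →L[ℂ] H, ⇑T ∈ closure ((fun S : G →L[ℂ] H => ⇑S) '' E) → T ∈ E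

/-- The intertwiner space `{x ∈ B(G,H) : ρ(b') ∘ x = x ∘ b' for all b' ∈ S}`,
as a linear subspace of `B(G,H)`. -/
def intertwinerSubmodule {G H : Type*}
    [NormedAddCommGroup G] [InnerProductSpace ℂ G]
    [NormedAddCommGroup H] [InnerProductSpace ℂ H]
    (S : Set (G →L[ℂ] G)) (ρ : (G →L[ℂ] G) → (H →L[ℂ] H)) :
    Submodule ℂ (G →L[ℂ] H) where
  carrier := {x : G →L[ℂ] H | ∀ b' ∈ S, (ρ b').comp x = x.comp b'}
  zero_mem' := by intro b' _; simp
  add_mem' := by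
    intro x y hx hy b' hb'
    simp only [ContinuousLinearMap.comp_add, ContinuousLinearMap.add_comp,
      hx b' hb', hy b' hb']
  smul_mem' := by
    intro c x hx b' hb'
    simp only [ContinuousLinearMap.comp_smulₛₗ, ContinuousLinearMap.smul_comp,
      RingHom.id_apply, hx b' hb']

open Filter Topology
open scoped ComplexInnerProductSpace

theorem norm_le_of_norm_apply_sq_le {𝕜 E F : Type*} [NontriviallyNormedField 𝕜]
    [NormedAddCommGroup E] [NormedSpace 𝕜 E] [NormedAddCommGroup F] [NormedSpace 𝕜 F]
    (y : E →L[𝕜] F) {M : ℝ} (hM : 0 ≤ M)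
    (h : ∀ g, ‖y g‖ ^ 2 ≤ M * ‖y‖ * ‖g‖ ^ 2) : ‖y‖ ≤ M := by
  have hMy : 0 ≤ M * ‖y‖ := by positivity
  have hsqrt : ‖y‖ ≤ √(M * ‖y‖) := opNorm_le_bound _ (Real.sqrt_nonneg _) fun g => by
    rw [← pow_le_pow_iff_left₀ (norm_nonneg _) (by positivity) two_ne_zero, mul_pow,
      Real.sq_sqrt hMy]
    exact h g
  have hsq := (Real.le_sqrt (norm_nonneg _) hMy).1 hsqrt
  nlinarith [norm_nonneg y]

theorem tendsto_atTop_of_norm_sub_le {α E : Type*} [DecidableEq α] [NormedAddCommGroup E]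
    {f : Finset α × ℕ → E} {z : E} (a : α) (C : ℝ)
    (h : ∀ F n, a ∈ F → ‖f (F, n) - z‖ ≤ 1 / ((n : ℝ) + 1) * C) : Tendsto f atTop (𝓝 z) := by
  rw [tendsto_iff_norm_sub_tendsto_zero]
  refine squeeze_zero' (Eventually.of_forall fun _ => norm_nonneg _)
    (eventually_atTop.2 ⟨({a}, 0), fun p hp => h p.1 p.2 (hp.1 (Finset.mem_singleton_self a))⟩) ?_
  rw [← prod_atTop_atTop_eq]
  simpa using (tendsto_one_div_add_atTop_nhds_zero_nat.comp tendsto_snd).mul_const C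

theorem exists_tendsto_inner_of_norm_le {G H α : Type*}
    [NormedAddCommGroup G] [InnerProductSpace ℂ G]
    [NormedAddCommGroup H] [InnerProductSpace ℂ H] [CompleteSpace H]
    (U : Ultrafilter α) (Y : α → G →L[ℂ] H) {R : ℝ} (hY : ∀ p, ‖Y p‖ ≤ R) :
    ∃ T : G →L[ℂ] H, ∀ g h, Tendsto (fun p => ⟪Y p g, h⟫) U (𝓝 ⟪T g, h⟫) := by
  have hR : 0 ≤ R := by
    obtain ⟨p⟩ := (U : Filter α).nonempty_of_neBot
    exact (norm_nonneg _).trans (hY p)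
  have hYgh : ∀ p g h, ‖⟪Y p g, h⟫‖ ≤ R * ‖g‖ * ‖h‖ := fun p g h =>
    (norm_inner_le_norm _ _).trans <| by gcongr; exact (Y p).le_of_opNorm_le (hY p) g
  have hlim : ∀ g h, ∃ z, Tendsto (fun p => ⟪Y p g, h⟫) U (𝓝 z) := by
    intro g h
    obtain ⟨z, -, hz⟩ := (isCompact_closedBall (0 : ℂ) (R * ‖g‖ * ‖h‖)).ultrafilter_le_nhds'
      (U.map fun p => ⟪Y p g, h⟫)
      (Ultrafilter.mem_map.2 (univ_mem' fun p => mem_closedBall_zero_iff.2 (hYgh p g h)))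
    exact ⟨z, hz⟩
  choose s hs using hlim
  have hbdd : ∀ g, Bornology.IsBounded (Set.range fun p => innerSL ℂ (Y p g)) := fun g =>
    isBounded_iff_forall_norm_le.2 ⟨R * ‖g‖, by
      rintro _ ⟨p, rfl⟩
      simpa only [innerSL_apply_norm] using (Y p).le_of_opNorm_le (hY p) g⟩
  let φ : G → StrongDual ℂ H := fun g =>
    ofTendstoOfBoundedRange (s g) (fun p => innerSL ℂ (Y p g)) (tendsto_pi_nhds.2 (hs g)) (hbdd g)
  let v : G → H := fun g => (InnerProductSpace.toDual ℂ H).symm (φ g)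
  have hv : ∀ g h, Tendsto (fun p => ⟪Y p g, h⟫) U (𝓝 ⟪v g, h⟫) := fun g h => by
    simpa [v, φ, InnerProductSpace.toDual_symm_apply] using hs g h
  have hadd : ∀ g₁ g₂, v (g₁ + g₂) = v g₁ + v g₂ := fun g₁ g₂ => ext_inner_right ℂ fun h =>
    tendsto_nhds_unique (hv (g₁ + g₂) h) <| by
      simpa only [map_add, inner_add_left] using (hv g₁ h).add (hv g₂ h)
  have hsmul : ∀ (a : ℂ) g, v (a • g) = a • v g := fun a g => ext_inner_right ℂ fun h =>
    tendsto_nhds_unique (hv (a • g) h) <| by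
      simpa only [map_smul, inner_smul_left] using (hv g h).const_mul (starRingEnd ℂ a)
  have hnorm : ∀ g, ‖v g‖ ≤ R * ‖g‖ := fun g => by
    rw [LinearIsometryEquiv.norm_map]
    refine opNorm_le_bound _ (by positivity) fun h => ?_
    exact le_of_tendsto (hs g h).norm (Eventually.of_forall fun p => hYgh p g h)
  exact ⟨LinearMap.mkContinuous ⟨⟨v, hadd⟩, hsmul⟩ R hnorm, hv⟩

def IsIntertwiner {M K L : Type*}
    [NormedAddCommGroup K] [InnerProductSpace ℂ K] [NormedAddCommGroup L] [InnerProductSpace ℂ L]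
    (S : Set M) (π : M → K →L[ℂ] K) (σ : M → L →L[ℂ] L) (T : K →L[ℂ] L) : Prop :=
  ∀ s ∈ S, σ s ∘L T = T ∘L π s

namespace IsIntertwiner

variable {M K L N : Type*}
  [NormedAddCommGroup K] [InnerProductSpace ℂ K] [NormedAddCommGroup L] [InnerProductSpace ℂ L]
  [NormedAddCommGroup N] [InnerProductSpace ℂ N]
  {S : Set M} {π : M → K →L[ℂ] K} {σ : M → L →L[ℂ] L} {τ : M → N →L[ℂ] N}

theorem comp {T : L →L[ℂ] N} {U : K →L[ℂ] L} (hT : IsIntertwiner S σ τ T)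
    (hU : IsIntertwiner S π σ U) : IsIntertwiner S π τ (T ∘L U) := fun s hs => by
  rw [← comp_assoc, hT s hs, comp_assoc, hU s hs, comp_assoc]

theorem adjoint [InvolutiveStar M] [CompleteSpace K] [CompleteSpace L] (hS : ∀ s ∈ S, star s ∈ S)
    (hπ : ∀ s ∈ S, ContinuousLinearMap.adjoint (π s) = π (star s))
    (hσ : ∀ s ∈ S, ContinuousLinearMap.adjoint (σ s) = σ (star s))
    {T : K →L[ℂ] L} (hT : IsIntertwiner S π σ T) :
    IsIntertwiner S σ π (ContinuousLinearMap.adjoint T) := fun s hs => by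
  have h := congrArg ContinuousLinearMap.adjoint (hT (star s) (hS s hs))
  rwa [adjoint_comp, adjoint_comp, hπ _ (hS s hs), hσ _ (hS s hs), star_star, eq_comm] at h

theorem ringInverse {A : K →L[ℂ] K} (h : IsIntertwiner S π π A) :
    IsIntertwiner S π π (Ring.inverse A) := fun s hs => by
  by_cases hA : IsUnit A
  · obtain ⟨u, rfl⟩ := hA
    rw [Ring.inverse_unit]
    exact Commute.units_inv_right (h s hs)
  · rw [Ring.inverse_non_unit _ hA, comp_zero, zero_comp]

theorem of_tendsto_inner {α : Type*} {l : Filter α} [l.NeBot] [CompleteSpace L]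
    {Y : α → K →L[ℂ] L} (hY : ∀ p, IsIntertwiner S π σ (Y p)) {T : K →L[ℂ] L}
    (hT : ∀ k v, Tendsto (fun p => ⟪Y p k, v⟫) l (𝓝 ⟪T k, v⟫)) : IsIntertwiner S π σ T :=
  fun s hs => ext fun k => ext_inner_right ℂ fun v => by
    have hYs : ∀ p, σ s (Y p k) = Y p (π s k) := fun p => congrArg (· k) (hY p s hs)
    have hlim := hT k (ContinuousLinearMap.adjoint (σ s) v)
    simp only [adjoint_inner_right, hYs] at hlim
    exact tendsto_nhds_unique hlim (hT (π s k) v)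

end IsIntertwiner

section Rows

variable {ι G H : Type*}
  [NormedAddCommGroup G] [InnerProductSpace ℂ G] [NormedAddCommGroup H] [InnerProductSpace ℂ H]

noncomputable def diagOp (b : G →L[ℂ] G) : PiLp 2 (fun _ : ι => G) →L[ℂ] PiLp 2 (fun _ : ι => G) :=
  (PiLp.continuousLinearEquiv 2 ℂ (fun _ : ι => G)).symm.toContinuousLinearMap ∘L
    ContinuousLinearMap.pi fun i => b ∘L PiLp.proj 2 (fun _ : ι => G) i

@[simp]
theorem diagOp_apply (b : G →L[ℂ] G) (u : PiLp 2 (fun _ : ι => G)) (i : ι) :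
    (diagOp b u).ofLp i = b (u.ofLp i) := rfl

variable [Fintype ι]

noncomputable def rowOp (x : ι → G →L[ℂ] H) : PiLp 2 (fun _ : ι => G) →L[ℂ] H :=
  ∑ i, x i ∘L PiLp.proj 2 (fun _ : ι => G) i

theorem rowOp_apply (x : ι → G →L[ℂ] H) (u : PiLp 2 (fun _ : ι => G)) :
    rowOp x u = ∑ i, x i (u.ofLp i) := by
  simp [rowOp]

theorem rowOp_single [DecidableEq ι] (x : ι → G →L[ℂ] H) (i : ι) (g : G) :
    rowOp x (PiLp.single 2 i g) = x i g := by
  rw [rowOp_apply, Fintype.sum_eq_single i fun j hj => by rw [PiLp.single_eq_of_ne _ hj, map_zero],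
    PiLp.single_eq_same]

theorem rowOp_comp {F : Type*} [NormedAddCommGroup F] [InnerProductSpace ℂ F]
    (x : ι → G →L[ℂ] H) (c : F →L[ℂ] PiLp 2 (fun _ : ι => G)) :
    rowOp x ∘L c = ∑ i, x i ∘L (PiLp.proj 2 (fun _ : ι => G) i ∘L c) := by
  simp [rowOp, finsetSum_comp, comp_assoc]

theorem adjoint_diagOp [CompleteSpace G] (b : G →L[ℂ] G) :
    adjoint (diagOp (ι := ι) b) = diagOp (adjoint b) :=
  ((eq_adjoint_iff _ _).2 fun u v => by simp [PiLp.inner_apply, adjoint_inner_left]).symm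

variable {M : Type*} {S : Set M} {π : M → G →L[ℂ] G}

theorem isIntertwiner_rowOp {σ : M → H →L[ℂ] H} {x : ι → G →L[ℂ] H}
    (hx : ∀ i, IsIntertwiner S π σ (x i)) :
    IsIntertwiner S (fun s => diagOp (π s)) σ (rowOp x) := fun s hs => by
  simp only [rowOp, comp_finsetSum, finsetSum_comp, comp_assoc]
  refine Finset.sum_congr rfl fun i _ => ?_
  rw [← comp_assoc, hx i s hs, comp_assoc]
  rfl

theorem isIntertwiner_proj (i : ι) :
    IsIntertwiner S (fun s => diagOp (π s)) π (PiLp.proj 2 (fun _ : ι => G) i) :=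
  fun _ _ => rfl

end Rows

section Gram

variable {K H : Type*} [NormedAddCommGroup K] [InnerProductSpace ℂ K] [CompleteSpace K]
  [NormedAddCommGroup H] [InnerProductSpace ℂ H] [CompleteSpace H]

noncomputable def regularizedGram (X : K →L[ℂ] H) (δ : ℝ) : K →L[ℂ] K :=
  adjoint X ∘L X + (δ : ℂ) • ContinuousLinearMap.id ℂ K

theorem inner_regularizedGram_apply (X : K →L[ℂ] H) (δ : ℝ) (u v : K) :
    ⟪regularizedGram X δ u, v⟫ = ⟪X u, X v⟫ + δ * ⟪u, v⟫ := by
  simp [regularizedGram, adjoint_inner_left]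

theorem re_inner_regularizedGram_apply_self (X : K →L[ℂ] H) (δ : ℝ) (u : K) :
    RCLike.re ⟪regularizedGram X δ u, u⟫ = ‖X u‖ ^ 2 + δ * ‖u‖ ^ 2 := by
  simp [inner_regularizedGram_apply, inner_self_eq_norm_sq_to_K, ← Complex.ofReal_pow]

theorem isUnit_regularizedGram (X : K →L[ℂ] H) {δ : ℝ} (hδ : 0 < δ) :
    IsUnit (regularizedGram X δ) :=
  isUnit_of_forall_le_norm_inner_map _ (c := ⟨δ, hδ.le⟩) hδ fun u => by
    refine le_trans ?_ (RCLike.re_le_norm _)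
    rw [re_inner_regularizedGram_apply_self]
    show ‖u‖ ^ 2 * δ ≤ _
    nlinarith [sq_nonneg ‖X u‖]

theorem regularizedGram_comp_ringInverse_comp {G : Type*} [NormedAddCommGroup G]
    [InnerProductSpace ℂ G] (X : K →L[ℂ] H) {δ : ℝ} (hδ : 0 < δ) (T : G →L[ℂ] K) :
    regularizedGram X δ ∘L (Ring.inverse (regularizedGram X δ) ∘L T) = T := by
  rw [← comp_assoc, ← mul_def, Ring.mul_inverse_cancel _ (isUnit_regularizedGram X hδ), one_def,
    id_comp]

theorem IsIntertwiner.regularizedGram {M : Type*} {S : Set M} {π : M → K →L[ℂ] K}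
    {σ : M → H →L[ℂ] H} {X : K →L[ℂ] H} (hX : IsIntertwiner S π σ X)
    (hX' : IsIntertwiner S σ π (ContinuousLinearMap.adjoint X)) (δ : ℝ) :
    IsIntertwiner S π π (regularizedGram X δ) := fun s hs => by
  simp only [_root_.regularizedGram, comp_add, add_comp, comp_smul, smul_comp, comp_id, id_comp,
    ← comp_assoc, hX' s hs]
  rw [comp_assoc, hX s hs, comp_assoc]

variable {G : Type*} [NormedAddCommGroup G] [InnerProductSpace ℂ G] [CompleteSpace G]
  {X : K →L[ℂ] H} {c : G →L[ℂ] K} {e : K →L[ℂ] G}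

theorem inner_sub_inner_of_regularizedGram_comp {δ : ℝ}
    (h : regularizedGram X δ ∘L c = adjoint e) (g : G) (w : K) :
    ⟪X (c g), X w⟫ - ⟪g, e w⟫ = -(δ * ⟪c g, w⟫) := by
  have hA := inner_regularizedGram_apply X δ (c g) w
  rw [← comp_apply, h, adjoint_inner_left] at hA
  rw [hA]
  ring

theorem norm_sq_add_le_of_regularizedGram_comp {δ : ℝ}
    (h : regularizedGram X δ ∘L c = adjoint e) (g : G) :
    ‖X (c g)‖ ^ 2 + δ * ‖c g‖ ^ 2 ≤ ‖e ∘L c‖ * ‖g‖ ^ 2 := by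
  rw [← re_inner_regularizedGram_apply_self, ← comp_apply _ c, h, adjoint_inner_left,
    ← inner_conj_symm, RCLike.conj_re, ← comp_apply e c]
  calc RCLike.re ⟪(e ∘L c) g, g⟫ ≤ ‖(e ∘L c) g‖ * ‖g‖ := re_inner_le_norm _ _
    _ ≤ ‖e ∘L c‖ * ‖g‖ * ‖g‖ := by gcongr; exact le_opNorm _ _
    _ = ‖e ∘L c‖ * ‖g‖ ^ 2 := by ring

theorem norm_comp_le_of_regularizedGram_comp {ε M : ℝ}
    (h : regularizedGram X (ε ^ 2) ∘L c = adjoint e) (hM : 0 ≤ M)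
    (hec : ‖e ∘L c‖ ≤ M * ‖X ∘L c‖) : ‖X ∘L c‖ ≤ M :=
  norm_le_of_norm_apply_sq_le _ hM fun g =>
    (le_add_of_nonneg_right (by positivity)).trans <|
      (norm_sq_add_le_of_regularizedGram_comp h g).trans (by gcongr)

theorem norm_inner_sub_inner_le_of_regularizedGram_comp {ε M : ℝ} (hε : 0 ≤ ε)
    (h : regularizedGram X (ε ^ 2) ∘L c = adjoint e) (hM : 0 ≤ M)
    (hec : ‖e ∘L c‖ ≤ M * ‖X ∘L c‖) (g : G) (w : K) :
    ‖⟪X (c g), X w⟫ - ⟪g, e w⟫‖ ≤ ε * (M * ‖w‖ * ‖g‖) := by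
  have hcg : ε * ‖c g‖ ≤ M * ‖g‖ := by
    have hy := norm_comp_le_of_regularizedGram_comp h hM hec
    have hsq := norm_sq_add_le_of_regularizedGram_comp h g
    have : ‖e ∘L c‖ ≤ M * M := hec.trans (by gcongr)
    rw [← pow_le_pow_iff_left₀ (by positivity) (by positivity) two_ne_zero]
    nlinarith [sq_nonneg ‖X (c g)‖, sq_nonneg ‖g‖]
  rw [inner_sub_inner_of_regularizedGram_comp h, norm_neg, norm_mul, Complex.norm_real,
    Real.norm_of_nonneg (by positivity)]
  calc ε ^ 2 * ‖⟪c g, w⟫‖ ≤ ε ^ 2 * (‖c g‖ * ‖w‖) := by gcongr; exact norm_inner_le_norm _ _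
    _ = ε * (ε * ‖c g‖) * ‖w‖ := by ring
    _ ≤ ε * (M * ‖g‖) * ‖w‖ := by gcongr
    _ = ε * (M * ‖w‖ * ‖g‖) := by ring

end Gram

section Intertwiners

-- Shortcuts: without them, instance search does not find the operator norm on `p →L[ℂ] E`.
noncomputable instance {G H : Type*} [NormedAddCommGroup G] [InnerProductSpace ℂ G]
    [NormedAddCommGroup H] [InnerProductSpace ℂ H] (p : Submodule ℂ (G →L[ℂ] H)) :
    NormedAddCommGroup p :=
  inferInstance

noncomputable instance {G H : Type*} [NormedAddCommGroup G] [InnerProductSpace ℂ G]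
    [NormedAddCommGroup H] [InnerProductSpace ℂ H] (p : Submodule ℂ (G →L[ℂ] H)) :
    NormedSpace ℂ p :=
  inferInstance

variable {G H : Type*} [NormedAddCommGroup G] [InnerProductSpace ℂ G] [CompleteSpace G]
  [NormedAddCommGroup H] [InnerProductSpace ℂ H]
  (B : VonNeumannAlgebra G) {ρ' : (G →L[ℂ] G) → (H →L[ℂ] H)}

local notation "𝒞" => intertwinerSubmodule (B.commutant : Set (G →L[ℂ] G)) ρ'

theorem isIntertwiner_commutant_iff (b : G →L[ℂ] G) :
    IsIntertwiner (B.commutant : Set (G →L[ℂ] G)) (fun s => s) (fun s => s) b ↔ b ∈ B := by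
  conv_rhs => rw [← B.commutant_commutant, VonNeumannAlgebra.mem_commutant_iff]
  rfl

theorem comp_mem_intertwinerSubmodule {x : G →L[ℂ] H} (hx : x ∈ 𝒞) {b : G →L[ℂ] G} (hb : b ∈ B) :
    x ∘L b ∈ 𝒞 :=
  IsIntertwiner.comp hx ((isIntertwiner_commutant_iff B b).2 hb)

theorem map_rowOp_comp (Φ : 𝒞 →L[ℂ] (G →L[ℂ] G))
    (hΦmod : ∀ (x : G →L[ℂ] H) (hx : x ∈ 𝒞) (b : G →L[ℂ] G), b ∈ B → ∀ (hxb : x ∘L b ∈ 𝒞),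
      Φ ⟨x ∘L b, hxb⟩ = (Φ ⟨x, hx⟩) ∘L b)
    {ι : Type*} [Fintype ι] (xs : ι → 𝒞) {c : G →L[ℂ] PiLp 2 (fun _ : ι => G)}
    (hc : ∀ i, PiLp.proj 2 (fun _ : ι => G) i ∘L c ∈ B)
    (hy : rowOp (fun i => (xs i : G →L[ℂ] H)) ∘L c ∈ 𝒞) :
    Φ ⟨_, hy⟩ = rowOp (fun i => Φ (xs i)) ∘L c := by
  have hsum : (⟨_, hy⟩ : 𝒞) =
      ∑ i, ⟨(xs i : G →L[ℂ] H) ∘L _, comp_mem_intertwinerSubmodule B (xs i).2 (hc i)⟩ :=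
    Subtype.ext <| by simp only [Submodule.coe_sum]; exact rowOp_comp _ c
  rw [hsum, map_sum, rowOp_comp]
  exact Finset.sum_congr rfl fun i _ => hΦmod _ (xs i).2 _ (hc i) _

theorem exists_near_representative [CompleteSpace H]
    (hρ_star : ∀ a ∈ B.commutant, ρ' (star a) = star (ρ' a))
    (Φ : 𝒞 →L[ℂ] (G →L[ℂ] G)) (hΦB : ∀ x, Φ x ∈ B)
    (hΦmod : ∀ (x : G →L[ℂ] H) (hx : x ∈ 𝒞) (b : G →L[ℂ] G), b ∈ B → ∀ (hxb : x ∘L b ∈ 𝒞),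
      Φ ⟨x ∘L b, hxb⟩ = (Φ ⟨x, hx⟩) ∘L b)
    (F : Finset 𝒞) {ε : ℝ} (hε : 0 < ε) :
    ∃ y ∈ 𝒞, ‖y‖ ≤ ‖Φ‖ ∧ ∀ x ∈ F, ∀ g g',
      ‖⟪y g', (x : G →L[ℂ] H) g⟫ - ⟪g', Φ x g⟫‖ ≤ ε * (‖Φ‖ * ‖g‖ * ‖g'‖) := by
  classical
  have hS : ∀ s ∈ (B.commutant : Set (G →L[ℂ] G)), star s ∈ (B.commutant : Set (G →L[ℂ] G)) :=
    fun s hs => star_mem hs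
  have hid : ∀ s ∈ (B.commutant : Set (G →L[ℂ] G)), adjoint s = star s :=
    fun s _ => (star_eq_adjoint s).symm
  have hdiag : ∀ s ∈ (B.commutant : Set (G →L[ℂ] G)),
      adjoint (diagOp (ι := F) s) = diagOp (star s) :=
    fun s _ => by rw [adjoint_diagOp, star_eq_adjoint]
  have hρ : ∀ s ∈ (B.commutant : Set (G →L[ℂ] G)), adjoint (ρ' s) = ρ' (star s) :=
    fun s hs => by rw [hρ_star s hs, star_eq_adjoint]
  let X := rowOp fun x : F => ((x : 𝒞) : G →L[ℂ] H)
  let e := rowOp fun x : F => Φ x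
  have hX : IsIntertwiner (B.commutant : Set (G →L[ℂ] G)) diagOp ρ' X :=
    isIntertwiner_rowOp (π := fun s => s) fun x => (x : 𝒞).2
  have he : IsIntertwiner (B.commutant : Set (G →L[ℂ] G)) diagOp (fun s => s) e :=
    isIntertwiner_rowOp fun _ => (isIntertwiner_commutant_iff B _).2 (hΦB _)
  let c := Ring.inverse (regularizedGram X (ε ^ 2)) ∘L adjoint e
  have hAc : regularizedGram X (ε ^ 2) ∘L c = adjoint e :=
    regularizedGram_comp_ringInverse_comp X (by positivity) _
  have hc : IsIntertwiner (B.commutant : Set (G →L[ℂ] G)) (fun s => s) diagOp c :=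
    (hX.regularizedGram (hX.adjoint hS hdiag hρ) _).ringInverse.comp (he.adjoint hS hdiag hid)
  have hyC : X ∘L c ∈ 𝒞 := hX.comp hc
  have hec : ‖e ∘L c‖ ≤ ‖Φ‖ * ‖X ∘L c‖ := by
    rw [← map_rowOp_comp B Φ hΦmod _
      (fun i => (isIntertwiner_commutant_iff B _).1 ((isIntertwiner_proj i).comp hc)) hyC]
    exact le_opNorm Φ _
  refine ⟨X ∘L c, hyC, norm_comp_le_of_regularizedGram_comp hAc (norm_nonneg Φ) hec,
    fun x hx g g' => ?_⟩
  have := norm_inner_sub_inner_le_of_regularizedGram_comp hε.le hAc (norm_nonneg Φ) hec g'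
    (PiLp.single 2 (⟨x, hx⟩ : F) g)
  rwa [rowOp_single, rowOp_single, PiLp.norm_single] at this

end Intertwiners

theorem intertwiner_space_selfDual_general
    {G H : Type*}
    [NormedAddCommGroup G] [InnerProductSpace ℂ G] [CompleteSpace G]
    [NormedAddCommGroup H] [InnerProductSpace ℂ H] [CompleteSpace H]
    (B : VonNeumannAlgebra G)
    (ρ' : (G →L[ℂ] G) → (H →L[ℂ] H))
    (hρ_star : ∀ a ∈ B.commutant, ρ' (star a) = star (ρ' a))
    (Φ : ↥(intertwinerSubmodule (B.commutant : Set (G →L[ℂ] G)) ρ') →L[ℂ] (G →L[ℂ] G))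
    (hΦB : ∀ x, Φ x ∈ B)
    (hΦmod : ∀ (x : G →L[ℂ] H)
      (hx : x ∈ intertwinerSubmodule (B.commutant : Set (G →L[ℂ] G)) ρ')
      (b : G →L[ℂ] G) (hb : b ∈ B)
      (hxb : x.comp b ∈ intertwinerSubmodule (B.commutant : Set (G →L[ℂ] G)) ρ'),
      Φ ⟨x.comp b, hxb⟩ = (Φ ⟨x, hx⟩).comp b) :
    ∃ y ∈ intertwinerSubmodule (B.commutant : Set (G →L[ℂ] G)) ρ',
      ∀ (x : G →L[ℂ] H)
        (hx : x ∈ intertwinerSubmodule (B.commutant : Set (G →L[ℂ] G)) ρ'),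
        Φ ⟨x, hx⟩ = (adjoint y).comp x := by
  classical
  choose Y hYC hYΦ hYerr using fun p : Finset _ × ℕ =>
    exists_near_representative B hρ_star Φ hΦB hΦmod p.1 (Nat.one_div_pos_of_nat (n := p.2))
  obtain ⟨T, hT⟩ := exists_tendsto_inner_of_norm_le (Ultrafilter.of atTop) Y hYΦ
  refine ⟨T, IsIntertwiner.of_tendsto_inner hYC hT, fun x hx =>
    ext fun g => ext_inner_left ℂ fun g' => ?_⟩
  rw [comp_apply, adjoint_inner_right]
  have hlim : Tendsto (fun p => ⟪Y p g', x g⟫) atTop (𝓝 ⟪g', Φ ⟨x, hx⟩ g⟫) :=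
    tendsto_atTop_of_norm_sub_le ⟨x, hx⟩ _ fun F n hxF => hYerr (F, n) _ hxF g g'
  exact tendsto_nhds_unique (hlim.mono_left (Ultrafilter.of_le _)) (hT g' (x g))

/-- The intertwiner space `C_{B'}(B(G,H))` is self-dual: every `B`-functional on it is
of the form `x ↦ y* ∘ x` for some `y` in the intertwiner space. -/
theorem intertwiner_space_selfDual
    {G H : Type*}
    [NormedAddCommGroup G] [InnerProductSpace ℂ G] [CompleteSpace G]
    [NormedAddCommGroup H] [InnerProductSpace ℂ H] [CompleteSpace H]
    (B : VonNeumannAlgebra G)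
    (E : Submodule ℂ (G →L[ℂ] H))
    (hE1 : ∀ x ∈ E, ∀ y ∈ E, (adjoint x).comp y ∈ B)
    (hE2 : ∀ x ∈ E, ∀ b ∈ B, x.comp b ∈ E)
    (hE3 : SOTClosed (E : Set (G →L[ℂ] H)))
    (hE4 : Dense (Submodule.span ℂ {h : H | ∃ x ∈ E, ∃ g : G, x g = h} : Set H))
    (ρ' : (G →L[ℂ] G) → (H →L[ℂ] H))
    (hρ_one : ρ' 1 = 1)
    (hρ_mul : ∀ a ∈ B.commutant, ∀ b ∈ B.commutant, ρ' (a * b) = ρ' a * ρ' b)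
    (hρ_add : ∀ a ∈ B.commutant, ∀ b ∈ B.commutant, ρ' (a + b) = ρ' a + ρ' b)
    (hρ_smul : ∀ (c : ℂ), ∀ a ∈ B.commutant, ρ' (c • a) = c • ρ' a)
    (hρ_star : ∀ a ∈ B.commutant, ρ' (star a) = star (ρ' a))
    (hρ_int : ∀ b' ∈ B.commutant, ∀ x ∈ E, ∀ g : G, ρ' b' (x g) = x (b' g))
    (Φ : ↥(intertwinerSubmodule (B.commutant : Set (G →L[ℂ] G)) ρ') →L[ℂ] (G →L[ℂ] G))
    (hΦB : ∀ x, Φ x ∈ B)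
    (hΦmod : ∀ (x : G →L[ℂ] H)
      (hx : x ∈ intertwinerSubmodule (B.commutant : Set (G →L[ℂ] G)) ρ')
      (b : G →L[ℂ] G) (hb : b ∈ B)
      (hxb : x.comp b ∈ intertwinerSubmodule (B.commutant : Set (G →L[ℂ] G)) ρ'),
      Φ ⟨x.comp b, hxb⟩ = (Φ ⟨x, hx⟩).comp b) :
    ∃ y ∈ intertwinerSubmodule (B.commutant : Set (G →L[ℂ] G)) ρ',
      ∀ (x : G →L[ℂ] H)
        (hx : x ∈ intertwinerSubmodule (B.commutant : Set (G →L[ℂ] G)) ρ'),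
        Φ ⟨x, hx⟩ = (adjoint y).comp x :=
  intertwiner_space_selfDual_general B ρ' hρ_star Φ hΦB hΦmod
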